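/- Let D be a positive digraph with at least one edge, n vertices, and q edges. Then the polytope P_D of magic labelings of D is an integral polytope (every vertex of P_D has integer coordinates) of dimension q - 2n + b, where b is the number of connected components of the associated bipartite graph G_D. -/

import Mathlib

/-!
A point of `P_D` is a doubly stochastic matrix supported on the edges of `D`, and `P_D` is the
face of the Birkhoff polytope on which the coordinates off the edges vanish. Hence every vertex of
`P_D` is a vertex of the Birkhoff polytope, i.e. a permutation matrix.

For the dimension, positivity of `D` gives a point of `P_D` that is positive on every edge, so the
direction of `P_D` is the whole kernel of the incidence matrix `N` of `G_D`, of dimension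
`q - rank N`. Orienting the edges of `G_D` from `A` to `B` turns the left kernel of `N` into the
kernel of the Laplacian of `G_D`, whose dimension is `b`; hence `rank N = 2n - b`.
-/

open Finset

variable {V : Type*} [Fintype V] [DecidableEq V]

/-- A magic labeling of the digraph with vertex set `V` and edge set `E ⊆ V × V`,
of magic sum `r`. -/
def IsMagicD (E : Finset (V × V)) (L : V × V → ℕ) (r : ℕ) : Prop :=
  (∀ e, e ∉ E → L e = 0) ∧ (∀ v : V, ∑ e ∈ E with e.1 = v, L e = r) ∧
    (∀ v : V, ∑ e ∈ E with e.2 = v, L e = r)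

/-- A positive digraph: for every edge `e` there is a magic labeling `L` of the digraph
with `L e > 0` (equivalently, the associated bipartite graph `G_D` is positive). -/
def IsPositiveD (E : Finset (V × V)) : Prop :=
  ∀ e ∈ E, ∃ (L : V × V → ℕ) (r : ℕ), IsMagicD E L r ∧ 0 < L e

/-- The polytope `P_D` of magic labelings of the digraph with edge set `E`:
assignments of nonnegative reals to the edges such that at every vertex the labels
of the outgoing edges sum to `1` and the labels of the incoming edges sum to `1`. -/
def PD (E : Finset (V × V)) : Set (V × V → ℝ) :=
  {x | (∀ e, e ∉ E → x e = 0) ∧ (∀ e, 0 ≤ x e) ∧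
    (∀ v : V, ∑ e ∈ E with e.1 = v, x e = 1) ∧ (∀ v : V, ∑ e ∈ E with e.2 = v, x e = 1)}

/-- The edge set of the bipartite graph `G_D` associated to the digraph with edge set `E`. -/
def EGD (E : Finset (V × V)) : Finset (Sym2 (V ⊕ V)) :=
  E.image (fun p => s(Sum.inl p.1, Sum.inr p.2))

/-- The simple graph used to define the connected components of `G_D`. -/
def compGraphGD (E : Finset (V × V)) : SimpleGraph (V ⊕ V) :=
  SimpleGraph.fromRel (fun u v => s(u, v) ∈ EGD E)

open Matrix Filter Topology

theorem isExtreme_sep_forall_eq_zero {𝕜 ι : Type*} [Field 𝕜] [LinearOrder 𝕜]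
    [IsStrictOrderedRing 𝕜] {A : Set (ι → 𝕜)} (hA : ∀ x ∈ A, ∀ i, 0 ≤ x i) (S : Set ι) :
    IsExtreme 𝕜 A {x ∈ A | ∀ i ∈ S, x i = 0} := by
  refine ⟨Set.sep_subset _ _, fun x₁ hx₁ x₂ hx₂ x ⟨_, hx⟩ ⟨a, b, ha, hb, _, hab⟩ =>
    Set.mem_sep hx₁ fun i hi => ?_⟩
  have h : a * x₁ i + b * x₂ i = 0 := by simpa [← hab] using hx i hi
  nlinarith [mul_nonneg ha.le (hA _ hx₁ i), mul_nonneg hb.le (hA _ hx₂ i)]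

theorem mem_vectorSpan_of_add_smul_mem {k M : Type*} [Field k] [AddCommGroup M] [Module k M]
    {s : Set M} {p v : M} {t : k} (ht : t ≠ 0) (hp : p ∈ s) (hpv : p + t • v ∈ s) :
    v ∈ vectorSpan k s := by
  have := vsub_mem_vectorSpan k hpv hp
  rwa [vsub_eq_sub, add_sub_cancel_left, Submodule.smul_mem_iff _ ht] at this

theorem exists_ne_zero_forall_pos_add_mul {ι : Type*} (s : Finset ι) {p : ι → ℝ} (x : ι → ℝ)
    (hp : ∀ i ∈ s, 0 < p i) : ∃ t ≠ 0, ∀ i ∈ s, 0 < p i + t * x i := by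
  have h : ∀ᶠ t in 𝓝[≠] (0 : ℝ), ∀ i ∈ s, 0 < p i + t * x i := by
    refine (eventually_all_finset s).2 fun i hi => nhdsWithin_le_nhds ?_
    have hc : ContinuousAt (fun t : ℝ => p i + t * x i) 0 := by fun_prop
    exact hc.eventually (lt_mem_nhds (by simpa using hp i hi))
  obtain ⟨t, ht, ht0⟩ := (h.and self_mem_nhdsWithin).exists
  exact ⟨t, ht0, ht⟩

omit [Fintype V] [DecidableEq V] in
def curryMatrix : (V × V → ℝ) ≃ₗ[ℝ] Matrix V V ℝ :=
  (LinearEquiv.curry ℝ ℝ V V).trans (Matrix.ofLinearEquiv ℝ)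

omit [Fintype V] [DecidableEq V] in
@[simp]
theorem curryMatrix_apply (x : V × V → ℝ) (i j : V) : curryMatrix x i j = x (i, j) := rfl

theorem sum_filter_fst_eq_sum {M : Type*} [AddCommMonoid M] {E : Finset (V × V)} {x : V × V → M}
    (hx : ∀ e ∉ E, x e = 0) (v : V) : ∑ e ∈ E with e.1 = v, x e = ∑ j, x (v, j) := by
  rw [Finset.sum_filter, Finset.sum_subset (Finset.subset_univ E) fun e _ he => by simp [hx e he],
    Fintype.sum_prod_type, Finset.sum_comm]
  simp

theorem sum_filter_snd_eq_sum {M : Type*} [AddCommMonoid M] {E : Finset (V × V)} {x : V × V → M}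
    (hx : ∀ e ∉ E, x e = 0) (v : V) : ∑ e ∈ E with e.2 = v, x e = ∑ i, x (i, v) := by
  rw [Finset.sum_filter, Finset.sum_subset (Finset.subset_univ E) fun e _ he => by simp [hx e he],
    Fintype.sum_prod_type]
  simp

theorem PD_eq_sep_doublyStochastic (E : Finset (V × V)) :
    PD E = {x ∈ curryMatrix ⁻¹' (doublyStochastic ℝ V : Set (Matrix V V ℝ)) |
      ∀ e ∈ (E : Set (V × V))ᶜ, x e = 0} := by
  ext x
  simp only [PD, Set.mem_ofPred_eq, Set.mem_preimage, SetLike.mem_coe, mem_doublyStochastic_iff_sum,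
    curryMatrix_apply, Set.mem_compl_iff]
  constructor
  · rintro ⟨h0, hnn, hrow, hcol⟩
    exact ⟨⟨fun i j => hnn _, fun i => by rw [← sum_filter_fst_eq_sum h0, hrow],
      fun j => by rw [← sum_filter_snd_eq_sum h0, hcol]⟩, h0⟩
  · rintro ⟨⟨hnn, hrow, hcol⟩, h0⟩
    exact ⟨h0, fun e => hnn _ _, fun v => by rw [sum_filter_fst_eq_sum h0, hrow],
      fun v => by rw [sum_filter_snd_eq_sum h0, hcol]⟩

theorem exists_perm_of_mem_extremePoints_PD {E : Finset (V × V)} {x : V × V → ℝ}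
    (hx : x ∈ Set.extremePoints ℝ (PD E)) :
    ∃ σ : Equiv.Perm V, curryMatrix x = σ.permMatrix ℝ := by
  set A := curryMatrix ⁻¹' (doublyStochastic ℝ V : Set (Matrix V V ℝ))
  have hA : ∀ y ∈ A, ∀ e, 0 ≤ y e := fun y hy e => nonneg_of_mem_doublyStochastic hy
  rw [PD_eq_sep_doublyStochastic, (isExtreme_sep_forall_eq_zero hA _).extremePoints_eq] at hx
  have : curryMatrix x ∈ Set.extremePoints ℝ (doublyStochastic ℝ V : Set (Matrix V V ℝ)) := by
    rw [← Set.image_preimage_eq (doublyStochastic ℝ V : Set (Matrix V V ℝ))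
      curryMatrix.surjective, ← image_extremePoints]
    exact Set.mem_image_of_mem _ hx.2
  rw [extremePoints_doublyStochastic] at this
  obtain ⟨σ, hσ⟩ := this
  exact ⟨σ, hσ.symm⟩

theorem exists_int_eq_of_mem_extremePoints_PD {E : Finset (V × V)} {x : V × V → ℝ}
    (hx : x ∈ Set.extremePoints ℝ (PD E)) (e : V × V) : ∃ z : ℤ, x e = z := by
  obtain ⟨σ, hσ⟩ := exists_perm_of_mem_extremePoints_PD hx
  have := congrFun₂ hσ e.1 e.2
  simp only [curryMatrix_apply, PEquiv.toMatrix_apply, Equiv.toPEquiv_apply, Option.mem_def,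
    Option.some.injEq] at this
  exact ⟨if σ e.1 = e.2 then 1 else 0, by rw [this]; split_ifs <;> simp⟩

omit [Fintype V] in
def incMatrix (E : Finset (V × V)) : Matrix (V ⊕ V) E ℝ :=
  Matrix.of fun u e => (if u = Sum.inl e.1.1 then 1 else 0) - (if u = Sum.inr e.1.2 then 1 else 0)

omit [Fintype V] in
theorem incMatrix_mulVec_inl (E : Finset (V × V)) (x : V × V → ℝ) (v : V) :
    (incMatrix E *ᵥ fun e => x e) (Sum.inl v) = ∑ e ∈ E with e.1 = v, x e := by
  rw [Finset.sum_filter, ← Finset.sum_coe_sort E]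
  simp [incMatrix, mulVec, dotProduct, eq_comm]

omit [Fintype V] in
theorem incMatrix_mulVec_inr (E : Finset (V × V)) (x : V × V → ℝ) (v : V) :
    (incMatrix E *ᵥ fun e => x e) (Sum.inr v) = -∑ e ∈ E with e.2 = v, x e := by
  rw [Finset.sum_filter, ← Finset.sum_coe_sort E]
  simp [incMatrix, mulVec, dotProduct, eq_comm]

theorem transpose_incMatrix_mulVec (E : Finset (V × V)) (y : V ⊕ V → ℝ) (e : E) :
    ((incMatrix E)ᵀ *ᵥ y) e = y (Sum.inl e.1.1) - y (Sum.inr e.1.2) := by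
  simp [incMatrix, mulVec, dotProduct, sub_mul, Finset.sum_sub_distrib]

omit [Fintype V] in
theorem compGraphGD_adj {E : Finset (V × V)} {u w : V ⊕ V} :
    (compGraphGD E).Adj u w ↔ ∃ e ∈ E,
      (u = Sum.inl e.1 ∧ w = Sum.inr e.2) ∨ (u = Sum.inr e.2 ∧ w = Sum.inl e.1) := by
  simp only [compGraphGD, SimpleGraph.fromRel_adj, EGD, Finset.mem_image, Sym2.eq_iff]
  constructor
  · rintro ⟨-, (⟨e, he, ⟨rfl, rfl⟩ | ⟨rfl, rfl⟩⟩ | ⟨e, he, ⟨rfl, rfl⟩ | ⟨rfl, rfl⟩⟩)⟩ <;>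
      exact ⟨e, he, by simp⟩
  · rintro ⟨e, he, ⟨rfl, rfl⟩ | ⟨rfl, rfl⟩⟩ <;>
      simp only [ne_eq, reduceCtorEq, not_false_eq_true, true_and] <;>
      exact .inl ⟨e, he, by simp⟩

omit [Fintype V] in
theorem forall_adj_compGraphGD_iff {α : Type*} {E : Finset (V × V)} (z : V ⊕ V → α) :
    (∀ u w, (compGraphGD E).Adj u w → z u = z w) ↔ ∀ e ∈ E, z (Sum.inl e.1) = z (Sum.inr e.2) := by
  refine ⟨fun h e he => h _ _ (compGraphGD_adj.2 ⟨e, he, .inl ⟨rfl, rfl⟩⟩), fun h u w huw => ?_⟩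
  obtain ⟨e, he, ⟨rfl, rfl⟩ | ⟨rfl, rfl⟩⟩ := compGraphGD_adj.1 huw
  exacts [h e he, (h e he).symm]

theorem finrank_ker_transpose_incMatrix (E : Finset (V × V)) :
    Module.finrank ℝ (LinearMap.ker (incMatrix E)ᵀ.mulVecLin) =
      Nat.card (compGraphGD E).ConnectedComponent := by
  classical
  have hker : LinearMap.ker (incMatrix E)ᵀ.mulVecLin =
      LinearMap.ker (toLin' ((compGraphGD E).lapMatrix ℝ)) := by
    ext y
    rw [LinearMap.mem_ker, LinearMap.mem_ker, toLin'_apply, mulVecLin_apply,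
      SimpleGraph.lapMatrix_mulVec_eq_zero_iff_forall_adj, forall_adj_compGraphGD_iff]
    simp [funext_iff, transpose_incMatrix_mulVec, sub_eq_zero]
  rw [hker, Nat.card_eq_fintype_card,
    SimpleGraph.card_connectedComponent_eq_finrank_ker_toLin'_lapMatrix]

theorem rank_incMatrix_add_card_connectedComponent (E : Finset (V × V)) :
    (incMatrix E).rank + Nat.card (compGraphGD E).ConnectedComponent = 2 * Fintype.card V := by
  have h := LinearMap.finrank_range_add_finrank_ker (incMatrix E)ᵀ.mulVecLin
  rw [finrank_ker_transpose_incMatrix, ← Matrix.rank, rank_transpose] at h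
  simpa [two_mul] using h

theorem finrank_ker_incMatrix_add_rank (E : Finset (V × V)) :
    Module.finrank ℝ (LinearMap.ker (incMatrix E).mulVecLin) + (incMatrix E).rank = E.card := by
  have h := LinearMap.finrank_range_add_finrank_ker (incMatrix E).mulVecLin
  rw [← Matrix.rank] at h
  simpa [add_comm] using h

namespace IsMagicD

variable {E : Finset (V × V)}

omit [Fintype V] in
theorem sum {ι : Type*} (s : Finset ι) {L : ι → V × V → ℕ} {r : ι → ℕ}
    (h : ∀ i ∈ s, IsMagicD E (L i) (r i)) : IsMagicD E (∑ i ∈ s, L i) (∑ i ∈ s, r i) := by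
  refine ⟨fun e he => ?_, fun v => ?_, fun v => ?_⟩
  · simp [Finset.sum_apply, Finset.sum_eq_zero fun i hi => (h i hi).1 e he]
  · simp only [Finset.sum_apply]
    rw [Finset.sum_comm]
    exact Finset.sum_congr rfl fun i hi => (h i hi).2.1 v
  · simp only [Finset.sum_apply]
    rw [Finset.sum_comm]
    exact Finset.sum_congr rfl fun i hi => (h i hi).2.2 v

omit [Fintype V] in
theorem pos_of_apply_pos {L : V × V → ℕ} {r : ℕ} (hL : IsMagicD E L r) {e : V × V} (he : e ∈ E)
    (hLe : 0 < L e) : 0 < r := by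
  rw [← hL.2.1 e.1]
  exact hLe.trans_le (Finset.single_le_sum (fun _ _ => Nat.zero_le _) (by simpa using he))

omit [Fintype V] in
theorem div_mem_PD {L : V × V → ℕ} {r : ℕ} (hL : IsMagicD E L r) (hr : 0 < r) :
    (fun e => (L e : ℝ) / r) ∈ PD E := by
  have hr' : (r : ℝ) ≠ 0 := by positivity
  refine ⟨fun e he => by simp [hL.1 e he], fun e => by positivity, fun v => ?_, fun v => ?_⟩
  · rw [← Finset.sum_div, ← Nat.cast_sum, hL.2.1 v, div_self hr']
  · rw [← Finset.sum_div, ← Nat.cast_sum, hL.2.2 v, div_self hr']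

end IsMagicD

omit [Fintype V] in
theorem IsPositiveD.exists_mem_PD_forall_pos {E : Finset (V × V)} (hpos : IsPositiveD E)
    (hne : E.Nonempty) : ∃ p ∈ PD E, ∀ e ∈ E, 0 < p e := by
  choose! L r hL hLpos using hpos
  have hr : 0 < ∑ e ∈ E, r e :=
    Finset.sum_pos (fun e he => (hL e he).pos_of_apply_pos he (hLpos e he)) hne
  refine ⟨_, (IsMagicD.sum E hL).div_mem_PD hr, fun e he => div_pos ?_ (by exact_mod_cast hr)⟩
  have : L e e ≤ (∑ e' ∈ E, L e') e := by
    rw [Finset.sum_apply]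
    exact Finset.single_le_sum (f := fun e' => L e' e) (fun _ _ => Nat.zero_le _) he
  exact_mod_cast (hLpos e he).trans_le this

omit [Fintype V] in
theorem incMatrix_mulVec_eq_iff (E : Finset (V × V)) (x : V × V → ℝ) :
    (incMatrix E *ᵥ fun e => x e) = (Sum.elim 1 (-1) : V ⊕ V → ℝ) ↔
      (∀ v, ∑ e ∈ E with e.1 = v, x e = 1) ∧ ∀ v, ∑ e ∈ E with e.2 = v, x e = 1 := by
  simp [funext_iff, incMatrix_mulVec_inl, incMatrix_mulVec_inr]

omit [Fintype V] in
theorem mem_PD_iff {E : Finset (V × V)} {x : V × V → ℝ} :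
    x ∈ PD E ↔ (∀ e ∉ E, x e = 0) ∧ (∀ e, 0 ≤ x e) ∧
      (incMatrix E *ᵥ fun e => x e) = (Sum.elim 1 (-1) : V ⊕ V → ℝ) := by
  rw [incMatrix_mulVec_eq_iff]
  rfl

omit [Fintype V] [DecidableEq V] in
theorem extend_val_of_not_mem {E : Finset (V × V)} (k : E → ℝ) {e : V × V} (he : e ∉ E) :
    Function.extend (Subtype.val : E → V × V) k 0 e = 0 :=
  Function.extend_apply' _ _ _ fun ⟨a, ha⟩ => he (ha ▸ a.2)

omit [Fintype V] in
theorem extend_val_restrict {E : Finset (V × V)} {x : V × V → ℝ} (hx : ∀ e ∉ E, x e = 0) :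
    Function.extend (Subtype.val : E → V × V) (fun e => x e) 0 = x := by
  funext e
  by_cases he : e ∈ E
  · exact Subtype.val_injective.extend_apply _ _ (⟨e, he⟩ : E)
  · rw [extend_val_of_not_mem _ he, hx e he]

omit [Fintype V] in
theorem vectorSpan_PD {E : Finset (V × V)} (hpos : IsPositiveD E) :
    vectorSpan ℝ (PD E) = (LinearMap.ker (incMatrix E).mulVecLin).map
      (Function.ExtendByZero.linearMap ℝ (Subtype.val : E → V × V)) := by
  apply le_antisymm
  · rw [vectorSpan_def, Submodule.span_le]
    rintro _ ⟨p, hp, q, hq, rfl⟩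
    rw [mem_PD_iff] at hp hq
    refine ⟨fun e => (p - q) e, ?_, extend_val_restrict fun e he => ?_⟩
    · have := congrArg₂ (· - ·) hp.2.2 hq.2.2
      rw [← mulVec_sub, sub_self] at this
      exact this
    · simp [hp.1 e he, hq.1 e he]
  · rintro _ ⟨k, hk, rfl⟩
    change Function.extend (Subtype.val : E → V × V) k 0 ∈ _
    rcases isEmpty_or_nonempty E with hE | hE
    · rw [show Function.extend (Subtype.val : E → V × V) k 0 = 0 from
        funext fun e => extend_val_of_not_mem k fun he => hE.false ⟨e, he⟩]
      exact zero_mem _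
    set x := Function.extend (Subtype.val : E → V × V) k 0
    have hx0 : ∀ e ∉ E, x e = 0 := fun e he => extend_val_of_not_mem k he
    have hxk : (fun e : E => x e) = k := funext fun e => Subtype.val_injective.extend_apply _ _ e
    obtain ⟨p, hp, hppos⟩ := hpos.exists_mem_PD_forall_pos (Finset.nonempty_coe_sort.1 hE)
    obtain ⟨t, ht, hpt⟩ := exists_ne_zero_forall_pos_add_mul E x hppos
    obtain ⟨hp0, -, hpsum⟩ := mem_PD_iff.1 hp
    refine mem_vectorSpan_of_add_smul_mem ht hp (mem_PD_iff.2 ⟨fun e he => ?_, fun e => ?_, ?_⟩)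
    · simp [hp0 e he, hx0 e he]
    · by_cases he : e ∈ E
      · exact (hpt e he).le
      · simp [hp0 e he, hx0 e he]
    · have : (fun e : E => (p + t • x) e) = (fun e : E => p e) + t • k := by
        rw [← hxk]; rfl
      rw [this, mulVec_add, mulVec_smul, hpsum, ← mulVecLin_apply, LinearMap.mem_ker.1 hk,
        smul_zero, add_zero]

omit [Fintype V] in
theorem finrank_vectorSpan_PD {E : Finset (V × V)} (hpos : IsPositiveD E) :
    Module.finrank ℝ (vectorSpan ℝ (PD E)) =
      Module.finrank ℝ (LinearMap.ker (incMatrix E).mulVecLin) := by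
  rw [vectorSpan_PD hpos]
  exact (Submodule.equivMapOfInjective _
    (Function.extend_injective Subtype.val_injective (0 : V × V → ℝ)) _).finrank_eq.symm

theorem PD_integral_and_dimension_general (E : Finset (V × V)) (hpos : IsPositiveD E) :
    (∀ x ∈ Set.extremePoints ℝ (PD E), ∀ e : V × V, ∃ z : ℤ, x e = (z : ℝ)) ∧
    Module.finrank ℝ (affineSpan ℝ (PD E)).direction + 2 * Fintype.card V =
      E.card + Nat.card (compGraphGD E).ConnectedComponent := by
  refine ⟨fun x hx => exists_int_eq_of_mem_extremePoints_PD hx, ?_⟩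
  rw [direction_affineSpan, finrank_vectorSpan_PD hpos, ← finrank_ker_incMatrix_add_rank,
    ← rank_incMatrix_add_card_connectedComponent]
  ring

/-- Let `D` be a positive digraph with at least one edge, `n` vertices and `q` edges.
Then `P_D` is an integral polytope (every vertex, i.e. extreme point, has integer
coordinates) of dimension `q - 2n + b`, where `b` is the number of connected components
of the associated bipartite graph `G_D` (the dimension identity is stated additively
to avoid natural subtraction). -/
theorem PD_integral_and_dimension (E : Finset (V × V)) (hpos : IsPositiveD E)
    (hne : E.Nonempty) :
    (∀ x ∈ Set.extremePoints ℝ (PD E), ∀ e : V × V, ∃ z : ℤ, x e = (z : ℝ)) ∧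
    Module.finrank ℝ (affineSpan ℝ (PD E)).direction + 2 * Fintype.card V =
      E.card + Nat.card (compGraphGD E).ConnectedComponent :=
  PD_integral_and_dimension_general E hpos
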